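/- arXiv:2503.11615 — 5 statements merged into one kernel-verified Lean document; each statement's English description precedes it below -/
import Mathlib

section
/- Let p ≥ 1, let C be a real symmetric positive definite p×p matrix with largest eigenvalue λ_max, and let 0 < τ < 2/λ_max. Then the linear operator L^τ_C on real p×p matrices, defined by L^τ_C[X] = C X + X Cᵀ − τ C X Cᵀ, is bijective. -/
open Matrix

/-- The operator `L^τ_C[X] = C X + X Cᵀ − τ C X Cᵀ` on real `p × p` matrices. -/
noncomputable def Lop {p : ℕ} (τ : ℝ) (C X : Matrix (Fin p) (Fin p) ℝ) :
    Matrix (Fin p) (Fin p) ℝ :=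
  C * X + X * Cᵀ - τ • (C * X * Cᵀ)

/-- For a symmetric positive definite `C` with largest eigenvalue `lmax` and
`0 < τ < 2 / lmax`, the operator `L^τ_C` is bijective. -/
theorem lop_bijective {p : ℕ} (hp : 1 ≤ p) (C : Matrix (Fin p) (Fin p) ℝ) (hC : C.PosDef)
    (lmax : ℝ) (hlmax : IsGreatest (Set.range hC.isHermitian.eigenvalues) lmax)
    (τ : ℝ) (hτ : 0 < τ) (hτ2 : τ < 2 / lmax) :
    Function.Bijective (fun X : Matrix (Fin p) (Fin p) ℝ => Lop τ C X) := by
  classical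
  set hH := hC.isHermitian with hHdef
  have hev : ∀ i, 0 < hH.eigenvalues i := hC.eigenvalues_pos
  have hlmax_pos : 0 < lmax := by
    obtain ⟨i, hi⟩ := hlmax.1
    exact hi ▸ hev i
  have hτlmax : τ * lmax < 2 := (lt_div_iff₀ hlmax_pos).mp hτ2
  have hτev : ∀ i, τ * hH.eigenvalues i < 2 := fun i =>
    lt_of_le_of_lt (mul_le_mul_of_nonneg_left (hlmax.2 ⟨i, rfl⟩) hτ.le) hτlmax
  have hcoef : ∀ i j, hH.eigenvalues i + hH.eigenvalues j
      - τ * hH.eigenvalues i * hH.eigenvalues j ≠ 0 := by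
    intro i j
    have hi := hev i; have hj := hev j
    have h1 := hτev i; have h2 := hτev j
    nlinarith [mul_pos hi hj]
  let L : Matrix (Fin p) (Fin p) ℝ →ₗ[ℝ] Matrix (Fin p) (Fin p) ℝ :=
    { toFun := fun X => Lop τ C X
      map_add' := fun X Y => by
        simp only [Lop, Matrix.mul_add, Matrix.add_mul, smul_add]
        abel
      map_smul' := fun c X => by
        simp only [Lop, Matrix.mul_smul, Matrix.smul_mul, RingHom.id_apply, smul_sub, smul_add,
          smul_comm τ c] }
  have hCt : Cᵀ = C := hH
  set U : Matrix (Fin p) (Fin p) ℝ := (hH.eigenvectorUnitary : Matrix (Fin p) (Fin p) ℝ) with hU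
  have hUU : U * star U = 1 := (Matrix.mem_unitaryGroup_iff).mp hH.eigenvectorUnitary.2
  have hUU' : star U * U = 1 := (Matrix.mem_unitaryGroup_iff').mp hH.eigenvectorUnitary.2
  set D : Matrix (Fin p) (Fin p) ℝ := Matrix.diagonal hH.eigenvalues with hD
  have hspec : C = U * D * star U := by
    have := hH.spectral_theorem
    rwa [RCLike.ofReal_real_eq_id, Function.id_comp] at this
  have hinj : Function.Injective L := by
    rw [← LinearMap.ker_eq_bot, LinearMap.ker_eq_bot']
    intro X hX
    simp only [L, LinearMap.coe_mk, AddHom.coe_mk] at hX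
    set Y : Matrix (Fin p) (Fin p) ℝ := star U * X * U with hYdef
    have e1 : star U * (C * X) * U = D * Y := by
      rw [hspec, show star U * (U * D * star U * X) * U = (star U * U) * D * (star U * X * U) by
        simp only [Matrix.mul_assoc], hUU', Matrix.one_mul, hYdef, Matrix.mul_assoc]
    have e2 : star U * (X * C) * U = Y * D := by
      rw [hspec, show star U * (X * (U * D * star U)) * U
          = (star U * X * U) * D * (star U * U) by simp only [Matrix.mul_assoc], hUU',
        Matrix.mul_one, hYdef]
    have e3 : star U * (C * X * C) * U = D * Y * D := by
      rw [hspec, show star U * (U * D * star U * X * (U * D * star U)) * U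
          = (star U * U) * D * (star U * X * U) * D * (star U * U) by
        simp only [Matrix.mul_assoc], hUU', Matrix.one_mul, Matrix.mul_one, hYdef,
        Matrix.mul_assoc]
    have hY : D * Y + Y * D - τ • (D * Y * D) = 0 := by
      have := congrArg (fun M => star U * M * U) hX
      simpa only [Lop, hCt, Matrix.add_mul, Matrix.sub_mul, Matrix.mul_add, Matrix.mul_sub,
        Matrix.mul_smul, Matrix.smul_mul, Matrix.mul_zero, Matrix.zero_mul, e1, e2, e3]
        using this
    have hYzero : Y = 0 := by
      ext i j
      have h0 := congrFun (congrFun hY i) j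
      simp only [Matrix.add_apply, Matrix.sub_apply, Matrix.smul_apply, hD,
        Matrix.diagonal_mul, Matrix.mul_diagonal, Matrix.zero_apply, smul_eq_mul] at h0
      have h' : (hH.eigenvalues i + hH.eigenvalues j
          - τ * hH.eigenvalues i * hH.eigenvalues j) * Y i j = 0 := by
        linear_combination h0
      simpa using (mul_eq_zero.mp h').resolve_left (hcoef i j)
    have hXeq : X = U * Y * star U := by
      rw [hYdef, show U * (star U * X * U) * star U = (U * star U) * X * (U * star U) by
        simp only [Matrix.mul_assoc], hUU, Matrix.one_mul, Matrix.mul_one]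
    rw [hXeq, hYzero, Matrix.mul_zero, Matrix.zero_mul]
  exact ⟨hinj, LinearMap.injective_iff_surjective.mp hinj⟩
end

section
/- Let C be a real symmetric positive definite p×p matrix with orthogonal diagonalization C = U diag(γ₁,…,γ_p) Uᵀ (U orthogonal, γ_i > 0), and let 0 < τ < 2/max_i γ_i. Then for every real p×p matrix X, the matrix Y := U ((Uᵀ X U) ⊙ K) Uᵀ, where ⊙ is the entrywise (Hadamard) product and K is the p×p matrix with entries K_{ij} = 1/(γ_i + γ_j − τ γ_i γ_j), satisfies L^τ_C[Y] = X; that is, (L^τ_C)^{-1}[X] = U ((Uᵀ X U) ⊙ K) Uᵀ. -/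
/-!
Conjugating by `U` reduces `L^τ_C` to `L^τ_D` with `D = diag γ`, which acts entrywise as
multiplication by `γ i + γ j - τ γ i γ j`. The step-size bound keeps these factors positive,
so the Hadamard product with their reciprocals `K` inverts it.
-/

open Matrix

/-- `(a + b) g - 2ab = a (g - b) + b (g - a) ≥ 0`, and `τ < 2 / g` makes the inequality strict. -/
lemma add_sub_mul_mul_pos {a b g τ : ℝ} (ha : 0 < a) (hb : 0 < b) (hag : a ≤ g) (hbg : b ≤ g)
    (hτ : τ < 2 / g) : 0 < a + b - τ * (a * b) := by
  have hg : 0 < g := ha.trans_le hag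
  have hab : 0 < a * b := mul_pos ha hb
  have h2 : 2 / g * (a * b) ≤ a + b := by
    rw [div_mul_eq_mul_div, div_le_iff₀ hg]
    nlinarith [mul_nonneg ha.le (sub_nonneg.2 hbg), mul_nonneg hb.le (sub_nonneg.2 hag)]
  nlinarith [mul_lt_mul_of_pos_right hτ hab]

section Lop

variable {p : ℕ} (τ : ℝ)

lemma lop_conj {U : Matrix (Fin p) (Fin p) ℝ} (hU : Uᵀ * U = 1) (D H : Matrix (Fin p) (Fin p) ℝ) :
    Lop τ (U * D * Uᵀ) (U * H * Uᵀ) = U * Lop τ D H * Uᵀ := by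
  have cancel (Z : Matrix (Fin p) (Fin p) ℝ) : Uᵀ * (U * Z) = Z := by
    rw [← Matrix.mul_assoc, hU, Matrix.one_mul]
  simp only [Lop, transpose_mul, transpose_transpose, Matrix.mul_add, Matrix.add_mul,
    Matrix.mul_sub, Matrix.sub_mul, Matrix.mul_smul, Matrix.smul_mul, Matrix.mul_assoc, cancel]

lemma lop_diagonal_apply (γ : Fin p → ℝ) (H : Matrix (Fin p) (Fin p) ℝ) (i j : Fin p) :
    Lop τ (diagonal γ) H i j = (γ i + γ j - τ * (γ i * γ j)) * H i j := by
  simp only [Lop, diagonal_transpose, Matrix.sub_apply, Matrix.add_apply, Matrix.smul_apply,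
    diagonal_mul, mul_diagonal, smul_eq_mul]
  ring

lemma lop_diagonal_hadamard {γ : Fin p → ℝ} {K : Matrix (Fin p) (Fin p) ℝ}
    (hK : ∀ i j, (γ i + γ j - τ * (γ i * γ j)) * K i j = 1) (A : Matrix (Fin p) (Fin p) ℝ) :
    Lop τ (diagonal γ) (A ⊙ K) = A := by
  ext i j
  rw [lop_diagonal_apply, hadamard_apply, mul_left_comm, hK, mul_one]

end Lop

theorem lop_inverse_eigenbasis_general {p : ℕ} (γ : Fin p → ℝ) (hγ : ∀ i, 0 < γ i)
    (U : Matrix (Fin p) (Fin p) ℝ) (hU : U * Uᵀ = 1)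
    (C : Matrix (Fin p) (Fin p) ℝ) (hC : C = U * Matrix.diagonal γ * Uᵀ)
    (g : ℝ) (hg : IsGreatest (Set.range γ) g)
    (τ : ℝ) (hτ2 : τ < 2 / g)
    (K : Matrix (Fin p) (Fin p) ℝ)
    (hK : ∀ i j, K i j = 1 / (γ i + γ j - τ * (γ i * γ j)))
    (X : Matrix (Fin p) (Fin p) ℝ) :
    Lop τ C (U * Matrix.hadamard (Uᵀ * X * U) K * Uᵀ) = X := by
  have hden (i j : Fin p) : (γ i + γ j - τ * (γ i * γ j)) * K i j = 1 := by
    rw [hK, mul_one_div_cancel]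
    exact (add_sub_mul_mul_pos (hγ i) (hγ j) (hg.2 ⟨i, rfl⟩) (hg.2 ⟨j, rfl⟩) hτ2).ne'
  rw [hC, lop_conj τ (mul_eq_one_comm.mp hU), lop_diagonal_hadamard τ hden]
  simp only [Matrix.mul_assoc, hU, Matrix.mul_one]
  rw [← Matrix.mul_assoc, hU, Matrix.one_mul]

/-- For `C = U diag(γ) Uᵀ` symmetric positive definite (`U` orthogonal,
`γ i > 0`) and `0 < τ < 2 / max_i γ_i`, the inverse of `L^τ_C` is given by
`(L^τ_C)⁻¹[X] = U ((Uᵀ X U) ⊙ K) Uᵀ` with `K i j = 1 / (γ i + γ j − τ γ i γ j)`,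
i.e. `L^τ_C[U ((Uᵀ X U) ⊙ K) Uᵀ] = X`. -/
theorem lop_inverse_eigenbasis {p : ℕ} (γ : Fin p → ℝ) (hγ : ∀ i, 0 < γ i)
    (U : Matrix (Fin p) (Fin p) ℝ) (hU : U * Uᵀ = 1) (hU' : Uᵀ * U = 1)
    (C : Matrix (Fin p) (Fin p) ℝ) (hC : C = U * Matrix.diagonal γ * Uᵀ)
    (g : ℝ) (hg : IsGreatest (Set.range γ) g)
    (τ : ℝ) (hτ : 0 < τ) (hτ2 : τ < 2 / g)
    (K : Matrix (Fin p) (Fin p) ℝ)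
    (hK : ∀ i j, K i j = 1 / (γ i + γ j - τ * (γ i * γ j)))
    (X : Matrix (Fin p) (Fin p) ℝ) :
    Lop τ C (U * Matrix.hadamard (Uᵀ * X * U) K * Uᵀ) = X :=
  lop_inverse_eigenbasis_general γ hγ U hU C hC g hg τ hτ2 K hK X
end

section
/- Let C be a real symmetric positive definite d×d matrix with smallest eigenvalue λ_min, and let 0 < γ < 2 λ_min. Then the matrix Σ := C (I − (γ/2) C^{-1})^{-1} is the unique solution of the discrete Lyapunov equation C^{-1} Σ + Σ C^{-1} − γ C^{-1} Σ C^{-1} = 2 I; that is, (L^γ_{C^{-1}})^{-1}[2I] = C (I − (γ/2) C^{-1})^{-1}. -/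
open Matrix

/-- For a symmetric positive definite `C` with smallest eigenvalue `lmin`
and `0 < γ < 2 lmin`, the matrix `Σ = C (I − (γ/2) C⁻¹)⁻¹` is the unique solution of the
discrete Lyapunov equation `C⁻¹ Σ + Σ C⁻ᵀ − γ C⁻¹ Σ C⁻ᵀ = 2 I`. -/
theorem lyapunov_solution_true_score {d : ℕ}
    (C : Matrix (Fin d) (Fin d) ℝ) (hC : C.PosDef)
    (lmin : ℝ) (hlmin : IsLeast (Set.range hC.isHermitian.eigenvalues) lmin)
    (γ : ℝ) (hγ : 0 < γ) (hγ2 : γ < 2 * lmin) :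
    Lop γ C⁻¹ (C * ((1 : Matrix (Fin d) (Fin d) ℝ) - (γ / 2) • C⁻¹)⁻¹)
        = (2 : ℝ) • (1 : Matrix (Fin d) (Fin d) ℝ) ∧
    ∀ S : Matrix (Fin d) (Fin d) ℝ,
      Lop γ C⁻¹ S = (2 : ℝ) • (1 : Matrix (Fin d) (Fin d) ℝ) →
      S = C * ((1 : Matrix (Fin d) (Fin d) ℝ) - (γ / 2) • C⁻¹)⁻¹ := by
  classical
  have hH := hC.isHermitian
  haveI : Invertible C := hC.isUnit.invertible
  set μ : ℝ := γ / 2 with hμdef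
  set U : Matrix (Fin d) (Fin d) ℝ := (hH.eigenvectorUnitary : Matrix (Fin d) (Fin d) ℝ)
    with hUdef
  set e : Fin d → ℝ := hH.eigenvalues with hedef
  have hU1 : U * star U = 1 := Matrix.mem_unitaryGroup_iff.mp hH.eigenvectorUnitary.2
  have hU2 : star U * U = 1 := Matrix.mem_unitaryGroup_iff'.mp hH.eigenvectorUnitary.2
  have hc1 : ∀ X : Matrix (Fin d) (Fin d) ℝ, star U * (U * X) = X := fun X => by
    rw [← mul_assoc, hU2, one_mul]
  have hspec : C = U * diagonal e * star U := by
    have h := hH.spectral_theorem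
    rw [RCLike.ofReal_real_eq_id, Function.id_comp] at h
    rw [hUdef, hedef]
    exact h
  have hμe : ∀ i, μ < e i := fun i =>
    lt_of_lt_of_le (by rw [hμdef]; linarith) (hlmin.2 ⟨i, rfl⟩)
  set M : Matrix (Fin d) (Fin d) ℝ := C - μ • 1 with hMdef
  have hdiag : diagonal (fun i => e i - μ) = diagonal e - μ • (1 : Matrix (Fin d) (Fin d) ℝ) := by
    ext i j
    by_cases h : i = j <;>
      simp [Matrix.diagonal_apply, Matrix.one_apply, h]
  have hMspec : M = U * diagonal (fun i => e i - μ) * star U := by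
    rw [hdiag, Matrix.mul_sub, Matrix.sub_mul, Matrix.mul_smul, Matrix.smul_mul, mul_one, hU1,
      ← hspec]
  have hDD : diagonal (fun i => e i - μ) * diagonal (fun i => (e i - μ)⁻¹)
      = (1 : Matrix (Fin d) (Fin d) ℝ) := by
    rw [diagonal_mul_diagonal]
    have h : (fun i => (e i - μ) * (e i - μ)⁻¹) = fun _ : Fin d => (1 : ℝ) :=
      funext fun i => mul_inv_cancel₀ (by have := hμe i; linarith)
    rw [h, diagonal_one]
  have hMN : M * (U * diagonal (fun i => (e i - μ)⁻¹) * star U) = 1 := by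
    rw [hMspec]
    simp only [mul_assoc, hc1]
    rw [← mul_assoc (diagonal fun i => e i - μ), hDD, one_mul, hU1]
  have hMunit : IsUnit M :=
    ⟨⟨M, U * diagonal (fun i => (e i - μ)⁻¹) * star U, hMN,
      mul_eq_one_comm.mp hMN⟩, rfl⟩
  haveI : Invertible M := hMunit.invertible
  have hCsum : C = M + μ • 1 := by rw [hMdef]; abel
  have hMinvC : M⁻¹ * C = 1 + μ • M⁻¹ := by
    rw [hCsum, mul_add, Matrix.mul_smul, mul_one, Matrix.inv_mul_of_invertible]
  have hCMinv : C * M⁻¹ = 1 + μ • M⁻¹ := by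
    rw [hCsum, add_mul, Matrix.smul_mul, one_mul, Matrix.mul_inv_of_invertible]
  have hCinvT : (C⁻¹)ᵀ = C⁻¹ := by
    have h := hH.inv.eq
    rwa [conjTranspose_eq_transpose_of_trivial] at h
  have hγμ : γ = μ + μ := by rw [hμdef]; ring
  have hSig : C * ((1 : Matrix (Fin d) (Fin d) ℝ) - μ • C⁻¹)⁻¹ = C * M⁻¹ * C := by
    have hB : (1 : Matrix (Fin d) (Fin d) ℝ) - μ • C⁻¹ = C⁻¹ * M := by
      rw [hMdef, mul_sub, Matrix.inv_mul_of_invertible, Matrix.mul_smul, mul_one]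
    rw [hB, Matrix.mul_inv_rev, Matrix.inv_inv_of_invertible, ← mul_assoc]
  have h2one : (2 : ℝ) • (1 : Matrix (Fin d) (Fin d) ℝ) = 1 + 1 := by
    rw [two_smul]
  have hmain : Lop γ C⁻¹ (C * M⁻¹ * C) = (2 : ℝ) • (1 : Matrix (Fin d) (Fin d) ℝ) := by
    simp only [Lop, hCinvT]
    simp only [← mul_assoc]
    simp only [Matrix.inv_mul_of_invertible, Matrix.mul_inv_cancel_right_of_invertible, one_mul]
    rw [hMinvC, hCMinv, hγμ, add_smul, h2one]
    abel
  refine ⟨by rw [hSig]; exact hmain, fun S hS => ?_⟩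
  set D : Matrix (Fin d) (Fin d) ℝ := S - C * M⁻¹ * C with hDdef
  have hLD : Lop γ C⁻¹ D = 0 := by
    have h : Lop γ C⁻¹ D = Lop γ C⁻¹ S - Lop γ C⁻¹ (C * M⁻¹ * C) := by
      simp only [Lop, hDdef, sub_mul, mul_sub, smul_sub]
      abel
    rw [h, hS, hmain, sub_self]
  have hMD : M * D + D * M = 0 := by
    have h0 : C * Lop γ C⁻¹ D * C = 0 := by rw [hLD, mul_zero, zero_mul]
    have hexp : C * Lop γ C⁻¹ D * C = C * D + D * C - γ • D := by
      simp only [Lop, hCinvT, mul_sub, sub_mul, mul_add, add_mul, Matrix.mul_smul,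
        Matrix.smul_mul]
      simp only [← mul_assoc]
      simp only [Matrix.mul_inv_of_invertible, Matrix.inv_mul_cancel_right_of_invertible,
        one_mul]
      abel
    rw [hexp] at h0
    calc M * D + D * M = C * D + D * C - γ • D := by
          simp only [hMdef, sub_mul, mul_sub, Matrix.smul_mul, Matrix.mul_smul, one_mul,
            mul_one, hγμ, add_smul]
          abel
      _ = 0 := h0
  have h2 : star U * (M * D + D * M) * U
      = diagonal (fun i => e i - μ) * (star U * D * U)
        + (star U * D * U) * diagonal (fun i => e i - μ) := by
    rw [hMspec]
    simp only [mul_add, add_mul, mul_assoc, hc1, hU2, mul_one, one_mul]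
  have h3 : diagonal (fun i => e i - μ) * (star U * D * U)
      + (star U * D * U) * diagonal (fun i => e i - μ) = 0 := by
    rw [← h2, hMD, mul_zero, zero_mul]
  have hDzero : star U * D * U = 0 := by
    ext i j
    have h4 : ((e i - μ) + (e j - μ)) * (star U * D * U) i j = 0 := by
      have h5 := Matrix.ext_iff.2 h3 i j
      simp only [Matrix.add_apply, Matrix.diagonal_mul, Matrix.mul_diagonal,
        Matrix.zero_apply] at h5
      linear_combination h5
    have hpos : 0 < (e i - μ) + (e j - μ) := by
      have := hμe i; have := hμe j; linarith
    simp only [Matrix.zero_apply]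
    rcases mul_eq_zero.mp h4 with h | h
    · exact absurd h hpos.ne'
    · exact h
  have hback : U * (star U * D * U) * star U = D := by
    simp only [← mul_assoc]
    rw [hU1, one_mul, mul_assoc, hU1, mul_one]
  have hD0 : D = 0 := by
    rw [hDzero, mul_zero, zero_mul] at hback
    exact hback.symm
  rw [hDdef] at hD0
  rw [hSig]
  exact sub_eq_zero.mp hD0
end

section
/- Let H₀ be a real symmetric positive definite d×d matrix and H₁ a real symmetric d×d matrix. Then, as ε → 0, (H₀ + ε H₁)^{1/2} = H₀^{1/2} + ε · L_{H₀^{1/2}}^{-1}[H₁] − ε² · L_{H₀^{1/2}}^{-1}[ (L_{H₀^{1/2}}^{-1}[H₁])² ] + o(ε²), where the square roots are the symmetric positive semidefinite matrix square roots. -/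
open Matrix Filter Topology Asymptotics

/-- The positive semidefinite square root of a matrix (zero if the matrix is not
positive semidefinite). -/
noncomputable def psdSqrt {d : ℕ} (M : Matrix (Fin d) (Fin d) ℝ) :
    Matrix (Fin d) (Fin d) ℝ :=
  open scoped Classical in
  if h : M.PosSemidef then
    h.1.eigenvectorUnitary.1 * diagonal ((↑) ∘ (√·) ∘ h.1.eigenvalues) *
      (star h.1.eigenvectorUnitary : Matrix (Fin d) (Fin d) ℝ)
  else 0

/-- The Sylvester operator `L_M[X] = M X + X M`. -/
def sylv {d : ℕ} (M X : Matrix (Fin d) (Fin d) ℝ) : Matrix (Fin d) (Fin d) ℝ :=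
  M * X + X * M

/-!
Write `S ε = (H₀ + ε H₁)^{1/2}` and `R ε = H₀^{1/2} + ε X₁ - ε² X₂`. The equations defining
`X₁, X₂` make `(R ε)²` agree with `H₀ + ε H₁ = (S ε)²` up to terms of order `ε³`. The square
root is stable in the following sense: if `S ⪰ 0` and the quadratic form of `R` is bounded below
by `c |v|²` with `c > 0`, then `c ‖S - R‖ ≤ ‖S² - R²‖` in the Frobenius norm, because
`S² - R² = S D + D R` with `D = S - R`, and pairing with `D` gives `⟨D, S D⟩ ≥ 0` and
`⟨D, D R⟩ ≥ c ‖D‖²`. As `R ε → H₀^{1/2}`, which is positive definite, this applies for small `ε`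
and gives `S ε - R ε = O(ε³)`.
-/

attribute [local instance] Matrix.frobeniusNormedAddCommGroup Matrix.frobeniusNormedSpace

namespace Matrix

variable {m n : Type*} [Fintype m] [Fintype n]

lemma dotProduct_self_nonneg {R : Type*} [Ring R] [LinearOrder R] [IsStrictOrderedRing R]
    (v : n → R) : 0 ≤ v ⬝ᵥ v :=
  Fintype.sum_nonneg fun i => mul_self_nonneg (v i)

def frobeniusInner (A B : Matrix m n ℝ) : ℝ := ∑ i, A i ⬝ᵥ B i

-- The Frobenius norm is by definition the norm of this nested `PiLp 2` vector.
lemma frobeniusInner_eq_inner (A B : Matrix m n ℝ) :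
    frobeniusInner A B =
      inner ℝ (WithLp.toLp 2 fun i => (WithLp.toLp 2 (A i) : EuclideanSpace ℝ n))
        (WithLp.toLp 2 fun i => (WithLp.toLp 2 (B i) : EuclideanSpace ℝ n)) := by
  simp [frobeniusInner, PiLp.inner_apply, dotProduct, mul_comm]

lemma abs_frobeniusInner_le (A B : Matrix m n ℝ) : |frobeniusInner A B| ≤ ‖A‖ * ‖B‖ := by
  rw [frobeniusInner_eq_inner]
  exact abs_real_inner_le_norm _ _

lemma frobeniusInner_self (A : Matrix m n ℝ) : frobeniusInner A A = ‖A‖ ^ 2 := by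
  rw [frobeniusInner_eq_inner]
  exact real_inner_self_eq_norm_sq _

lemma frobeniusInner_add_right (A B C : Matrix m n ℝ) :
    frobeniusInner A (B + C) = frobeniusInner A B + frobeniusInner A C := by
  simp only [frobeniusInner, ← Finset.sum_add_distrib, ← dotProduct_add]
  rfl

lemma frobeniusInner_transpose (A B : Matrix m n ℝ) :
    frobeniusInner Aᵀ Bᵀ = frobeniusInner A B := by
  simp only [frobeniusInner, dotProduct, transpose_apply]
  exact Finset.sum_comm

lemma norm_apply_le_frobenius_norm (A : Matrix m n ℝ) (i : m) (j : n) : ‖A i j‖ ≤ ‖A‖ :=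
  (PiLp.norm_apply_le (WithLp.toLp 2 (A i)) j).trans
    (PiLp.norm_apply_le (WithLp.toLp 2 fun i => WithLp.toLp 2 (A i)) i)

lemma isBigO_apply {α : Type*} {l : Filter α} (f : α → Matrix m n ℝ) (i : m) (j : n) :
    (fun x => f x i j) =O[l] f :=
  .of_bound 1 (.of_forall fun x => by
    rw [one_mul]
    exact norm_apply_le_frobenius_norm (f x) i j)

lemma frobenius_norm_vecMulVec_self (v : n → ℝ) : ‖vecMulVec v v‖ = v ⬝ᵥ v := by
  have hsq : ‖vecMulVec v v‖ ^ 2 = (v ⬝ᵥ v) ^ 2 := by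
    rw [← frobeniusInner_self]
    simp only [frobeniusInner, dotProduct, vecMulVec_apply, sq, Finset.sum_mul_sum]
    exact Finset.sum_congr rfl fun i _ => Finset.sum_congr rfl fun j _ => by ring
  exact (pow_left_inj₀ (norm_nonneg _) (dotProduct_self_nonneg v) two_ne_zero).1 hsq

lemma abs_dotProduct_mulVec_le (P : Matrix n n ℝ) (v : n → ℝ) :
    |v ⬝ᵥ P *ᵥ v| ≤ ‖P‖ * (v ⬝ᵥ v) := by
  have h : v ⬝ᵥ P *ᵥ v = frobeniusInner P (vecMulVec v v) := by
    simp only [frobeniusInner, dotProduct, mulVec, vecMulVec_apply, Finset.mul_sum]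
    exact Finset.sum_congr rfl fun i _ => Finset.sum_congr rfl fun j _ => by ring
  rw [h, ← frobenius_norm_vecMulVec_self]
  exact abs_frobeniusInner_le _ _

def IsCoerciveWith (M : Matrix n n ℝ) (c : ℝ) : Prop :=
  ∀ v, c * (v ⬝ᵥ v) ≤ v ⬝ᵥ M *ᵥ v

lemma PosDef.exists_isCoerciveWith [DecidableEq n] {M : Matrix n n ℝ} (hM : M.PosDef) :
    ∃ c > 0, M.IsCoerciveWith c := by
  -- `0 < c ≤` every eigenvalue, so that `M - c • 1 = U diag(λ - c) Uᴴ` is positive semidefinite.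
  obtain ⟨c, hle, hc⟩ := ((Filter.eventually_all.2 fun k => eventually_le_nhds
    (hM.eigenvalues_pos k)).filter_mono nhdsWithin_le_nhds |>.and
      (self_mem_nhdsWithin (s := Set.Ioi (0 : ℝ)))).exists
  have hpsd : (M - c • 1).PosSemidef := by
    let U : Matrix n n ℝ := hM.1.eigenvectorUnitary
    have hsub : U * diagonal (fun k => hM.1.eigenvalues k - c) * star U = M - c • 1 := by
      have hU : U * star U = 1 := Unitary.mul_star_self_of_mem hM.1.eigenvectorUnitary.2
      conv_rhs => rw [hM.1.spectral_theorem, Unitary.conjStarAlgAut_apply]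
      rw [← diagonal_sub, ← smul_one_eq_diagonal, mul_sub, sub_mul, mul_smul_comm, mul_one,
        smul_mul_assoc, hU]
      rfl
    rw [← hsub]
    exact (PosSemidef.diagonal fun k => sub_nonneg.2 (hle k)).mul_mul_conjTranspose_same _
  refine ⟨c, hc, fun v => ?_⟩
  simpa [sub_mulVec, smul_mulVec, one_mulVec, sub_nonneg] using hpsd.dotProduct_mulVec_nonneg v

lemma IsCoerciveWith.eventually_of_tendsto {α : Type*} {l : Filter α} {f : α → Matrix n n ℝ}
    {M : Matrix n n ℝ} {c c' : ℝ} (hM : M.IsCoerciveWith c) (hc' : c' < c)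
    (hf : Tendsto f l (𝓝 M)) : ∀ᶠ x in l, (f x).IsCoerciveWith c' := by
  filter_upwards [hf.eventually (Metric.ball_mem_nhds M (sub_pos.2 hc'))] with x hx v
  rw [dist_eq_norm] at hx
  have hP := abs_dotProduct_mulVec_le (f x - M) v
  rw [sub_mulVec, dotProduct_sub] at hP
  have := dotProduct_self_nonneg v
  nlinarith [abs_le.1 hP, hM v]

lemma PosDef.eventually_posSemidef_add_smul [DecidableEq n] {A B : Matrix n n ℝ}
    (hA : A.PosDef) (hB : B.IsHermitian) : ∀ᶠ ε in 𝓝 (0 : ℝ), (A + ε • B).PosSemidef := by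
  obtain ⟨c, hc, hAc⟩ := hA.exists_isCoerciveWith
  have hlim : Tendsto (fun ε : ℝ => A + ε • B) (𝓝 0) (𝓝 A) := by
    simpa using (Continuous.tendsto (by fun_prop) 0 : Tendsto (fun ε : ℝ => A + ε • B) _ _)
  filter_upwards [hAc.eventually_of_tendsto hc hlim] with ε hε
  exact .of_dotProduct_mulVec_nonneg (hA.1.add (hB.smul (IsSelfAdjoint.all ε))) fun v => by
    simpa using hε v

lemma IsCoerciveWith.mul_frobeniusInner_self_le {R : Matrix n n ℝ} {c : ℝ}
    (hR : R.IsCoerciveWith c) (D : Matrix m n ℝ) :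
    c * frobeniusInner D D ≤ frobeniusInner D (D * R) := by
  simp only [frobeniusInner, Finset.mul_sum, mul_apply_eq_vecMul]
  refine Finset.sum_le_sum fun i _ => ?_
  rw [dotProduct_comm _ (D i ᵥ* R), ← dotProduct_mulVec]
  exact hR _

lemma IsCoerciveWith.mul_norm_sub_le {S R : Matrix n n ℝ} {c : ℝ} (hS : S.PosSemidef)
    (hR : R.IsCoerciveWith c) : c * ‖S - R‖ ≤ ‖S * S - R * R‖ := by
  set D := S - R
  have hsplit : S * S - R * R = S * D + D * R := by simp only [D]; noncomm_ring
  have hSD : 0 ≤ frobeniusInner D (S * D) := by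
    have hS₀ : S.IsCoerciveWith 0 := fun v => by simpa using hS.dotProduct_mulVec_nonneg v
    have hSt : Sᵀ = S := by rw [← conjTranspose_eq_transpose_of_trivial]; exact hS.1
    rw [← frobeniusInner_transpose, transpose_mul, hSt]
    simpa using hS₀.mul_frobeniusInner_self_le Dᵀ
  have hkey : c * ‖D‖ ^ 2 ≤ ‖D‖ * ‖S * S - R * R‖ :=
    calc c * ‖D‖ ^ 2 ≤ frobeniusInner D (S * S - R * R) := by
          rw [← frobeniusInner_self, hsplit, frobeniusInner_add_right]
          linarith [hR.mul_frobeniusInner_self_le D]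
      _ ≤ ‖D‖ * ‖S * S - R * R‖ := (le_abs_self _).trans (abs_frobeniusInner_le _ _)
  rcases (norm_nonneg D).eq_or_lt with h | h
  · rw [← h, mul_zero]
    exact norm_nonneg _
  · nlinarith

lemma isBigO_sub_of_isCoerciveWith {α : Type*} {l : Filter α} {S R : α → Matrix n n ℝ}
    {c : ℝ} (hc : 0 < c) (hS : ∀ᶠ x in l, (S x).PosSemidef)
    (hR : ∀ᶠ x in l, (R x).IsCoerciveWith c) :
    (fun x => S x - R x) =O[l] fun x => S x * S x - R x * R x := by
  refine IsBigO.of_bound c⁻¹ ?_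
  filter_upwards [hS, hR] with x hSx hRx
  rw [← div_eq_inv_mul, le_div_iff₀' hc]
  exact hRx.mul_norm_sub_le hSx

end Matrix

section SquareRoot

variable {d : ℕ}

lemma psdSqrt_posSemidef (M : Matrix (Fin d) (Fin d) ℝ) : (psdSqrt M).PosSemidef := by
  rw [psdSqrt]
  split
  · exact (PosSemidef.diagonal fun i => by simp [Real.sqrt_nonneg]).mul_mul_conjTranspose_same _
  · exact PosSemidef.zero

lemma psdSqrt_mul_self {M : Matrix (Fin d) (Fin d) ℝ} (h : M.PosSemidef) :
    psdSqrt M * psdSqrt M = M := by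
  rw [psdSqrt, dif_pos h]
  have hU : star (h.1.eigenvectorUnitary : Matrix (Fin d) (Fin d) ℝ) *
      h.1.eigenvectorUnitary = 1 :=
    h.1.eigenvectorUnitary.2.1
  conv_rhs => rw [h.1.spectral_theorem, Unitary.conjStarAlgAut_apply]
  simp only [Matrix.mul_assoc]
  rw [← Matrix.mul_assoc (star _) _, hU, Matrix.one_mul, ← Matrix.mul_assoc (diagonal _),
    diagonal_mul_diagonal]
  congr 3
  funext k
  simp [Real.mul_self_sqrt (h.eigenvalues_nonneg k)]

lemma psdSqrt_posDef {M : Matrix (Fin d) (Fin d) ℝ} (hM : M.PosDef) : (psdSqrt M).PosDef :=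
  (psdSqrt_posSemidef M).posDef_iff_det_ne_zero.2 fun h => hM.det_pos.ne' <| by
    rw [← psdSqrt_mul_self hM.posSemidef, det_mul, h, zero_mul]

lemma taylor_mul_self (Q X₁ X₂ : Matrix (Fin d) (Fin d) ℝ) (ε : ℝ) :
    (Q + ε • X₁ - ε ^ 2 • X₂) * (Q + ε • X₁ - ε ^ 2 • X₂) =
      Q * Q + ε • sylv Q X₁ + ε ^ 2 • (X₁ * X₁ - sylv Q X₂) -
        ε ^ 3 • (X₁ * X₂ + X₂ * X₁ - ε • (X₂ * X₂)) := by
  simp only [sylv, add_mul, mul_add, sub_mul, mul_sub, smul_mul_assoc, mul_smul_comm, smul_smul,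
    smul_add, smul_sub]
  module

end SquareRoot

/-- Second-order Taylor expansion of the matrix square root: for `H₀`
symmetric positive definite and `H₁` symmetric, writing `X₁ = L_{H₀^{1/2}}⁻¹[H₁]` and
`X₂ = L_{H₀^{1/2}}⁻¹[X₁²]`, we have
`(H₀ + ε H₁)^{1/2} = H₀^{1/2} + ε X₁ − ε² X₂ + o(ε²)` as `ε → 0` (entrywise). -/
theorem sqrt_second_order_expansion {d : ℕ}
    (H0 H1 : Matrix (Fin d) (Fin d) ℝ) (hH0 : H0.PosDef) (hH1 : H1.IsSymm)
    (X1 X2 : Matrix (Fin d) (Fin d) ℝ)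
    (hX1 : sylv (psdSqrt H0) X1 = H1)
    (hX2 : sylv (psdSqrt H0) X2 = X1 * X1) :
    ∀ i j, (fun ε : ℝ =>
        (psdSqrt (H0 + ε • H1) - (psdSqrt H0 + ε • X1 - (ε ^ 2) • X2)) i j)
      =o[𝓝 (0 : ℝ)] fun ε => ε ^ 2 := by
  intro i j
  set Q := psdSqrt H0
  set S : ℝ → Matrix (Fin d) (Fin d) ℝ := fun ε => psdSqrt (H0 + ε • H1)
  set R : ℝ → Matrix (Fin d) (Fin d) ℝ := fun ε => Q + ε • X1 - ε ^ 2 • X2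
  set E : ℝ → Matrix (Fin d) (Fin d) ℝ := fun ε => X1 * X2 + X2 * X1 - ε • (X2 * X2)
  have hH1h : H1.IsHermitian := by rwa [IsHermitian, conjTranspose_eq_transpose_of_trivial]
  obtain ⟨c, hc, hQc⟩ := (psdSqrt_posDef hH0).exists_isCoerciveWith
  have hR : ∀ᶠ ε in 𝓝 (0 : ℝ), (R ε).IsCoerciveWith (c / 2) :=
    hQc.eventually_of_tendsto (half_lt_self hc)
      (by simpa [R] using (Continuous.tendsto (by fun_prop) 0 : Tendsto R _ _))
  have hcube : (fun ε => S ε * S ε - R ε * R ε) =ᶠ[𝓝 0] fun ε => ε ^ 3 • E ε := by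
    filter_upwards [hH0.eventually_posSemidef_add_smul hH1h] with ε hε
    rw [psdSqrt_mul_self hε, taylor_mul_self, hX1, hX2, psdSqrt_mul_self hH0.posSemidef,
      sub_self, smul_zero, add_zero, sub_sub_cancel]
  have hE : (fun ε => ε ^ 3 • E ε) =O[𝓝 0] fun ε => ε ^ 3 := by
    simpa using (isBigO_refl (fun ε : ℝ => ε ^ 3) _).smul
      ((Continuous.tendsto (by fun_prop) 0 : Tendsto E _ _).isBigO_one ℝ)
  have hsqrt := isBigO_sub_of_isCoerciveWith (S := S) (half_pos hc)
    (.of_forall fun ε => psdSqrt_posSemidef _) hR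
  exact ((isBigO_apply _ i j).trans (hsqrt.trans (hcube.trans_isBigO hE))).trans_isLittleO
    (isLittleO_pow_pow (by norm_num))
end

section
/- Let ẑ be a Gaussian random vector on ℝ^p with mean 0 and (symmetric positive semidefinite) covariance C_ẑ, let r ∈ ℝ^p, set z := ẑ + r and C_z := C_ẑ + r rᵀ. Then for every real p×p matrix S: E[ z zᵀ S z zᵀ ] = C_z S C_z + C_z Sᵀ C_z + ⟨C_z, S⟩ C_z − 2 ⟨r rᵀ, S⟩ r rᵀ, where ⟨·,·⟩ is the Frobenius inner product. -/
/-!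
A normal law `N(μ, v)` has fourth moment `μ⁴ + 6μ²v + 3v²`, the fourth derivative at `0` of its
moment generating function `exp (μ t + v t² / 2)`. Every linear functional `a ⬝ᵥ X` of a Gaussian
vector with mean `m` and covariance `C` has law `N(a ⬝ᵥ m, a ⬝ᵥ C *ᵥ a)`, so the difference between
the mixed moment `E[(a ⬝ᵥ X)(b ⬝ᵥ X)(c ⬝ᵥ X)(e ⬝ᵥ X)]` and the Isserlis expression in the
second-moment matrix `K = C + m mᵀ` is a symmetric multi-additive form vanishing on the diagonal;
by polarization it vanishes. Taking coordinate vectors and contracting with `S` gives the matrix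
identity.
-/

open Matrix MeasureTheory ProbabilityTheory

/-- A random vector `X` is Gaussian with mean `μ` and covariance `C` iff every linear
functional of `X` is (one-dimensional) Gaussian with the corresponding parameters. -/
def IsGaussianVec {Ω : Type*} [MeasurableSpace Ω] (P : Measure Ω) {d : ℕ}
    (X : Ω → Fin d → ℝ) (μ : Fin d → ℝ) (C : Matrix (Fin d) (Fin d) ℝ) : Prop :=
  Measurable X ∧ ∀ a : Fin d → ℝ,
    Measure.map (fun ω => ∑ i, a i * X ω i) P =
      gaussianReal (∑ i, a i * μ i) (Real.toNNReal (∑ i, ∑ j, a i * C i j * a j))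

open Real Polynomial
open scoped NNReal ENNReal

theorem eq_zero_of_symm_of_map_add_of_diag {V : Type*} [AddCommGroup V] (T : V → V → V → V → ℝ)
    (hadd : ∀ x x' y z w, T (x + x') y z w = T x y z w + T x' y z w)
    (h12 : ∀ x y z w, T x y z w = T y x z w) (h23 : ∀ x y z w, T x y z w = T x z y w)
    (h34 : ∀ x y z w, T x y z w = T x y w z) (hdiag : ∀ x, T x x x x = 0) (a b c d : V) :
    T a b c d = 0 := by
  have hadd2 : ∀ x y y' z w, T x (y + y') z w = T x y z w + T x y' z w := fun x y y' z w => by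
    rw [h12, hadd, h12, h12 y']
  have hadd3 : ∀ x y z z' w, T x y (z + z') w = T x y z w + T x y z' w := fun x y z z' w => by
    rw [h23, hadd2, h23, h23 x z']
  have hadd4 : ∀ x y z w w', T x y z (w + w') = T x y z w + T x y z w' := fun x y z w w' => by
    rw [h34, hadd3, h34, h34 x y w']
  have hneg : ∀ x y z w, T x y z (-w) = -T x y z w := fun x y z w =>
    (AddMonoidHom.mk' (T x y z) (hadd4 x y z)).map_neg w
  have hneg3 : ∀ x y z w, T x y (-z) w = -T x y z w := fun x y z w => by
    rw [h34, hneg, h34]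
  have hneg2 : ∀ x y z w, T x (-y) z w = -T x y z w := fun x y z w => by
    rw [h23, hneg3, h23]
  have hneg1 : ∀ x y z w, T (-x) y z w = -T x y z w := fun x y z w => by
    rw [h12, hneg2, h12]
  -- In `T (x + y) … (x + y) + T (x - y) … (x - y)` the terms odd in `y` cancel, leaving
  -- `2 T x x x x + 12 T x x y y + 2 T y y y y`.
  have hxxyy : ∀ x y, T x x y y = 0 := fun x y => by
    have hp := hdiag (x + y)
    have hm := hdiag (x + -y)
    simp only [hadd, hadd2, hadd3, hadd4, hneg1, hneg2, hneg3, hneg, neg_neg] at hp hm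
    linarith [hdiag x, hdiag y, h23 x y x y, h34 x y y x, h12 y x x y, h12 y x y x, h23 y y x x]
  have huvyy : ∀ u v y, T u v y y = 0 := fun u v y => by
    have h := hxxyy (u + v) y
    simp only [hadd, hadd2, hxxyy, h12 v u] at h
    linarith
  have h := huvyy a b (c + d)
  simp only [hadd3, hadd4, huvyy, h34 a b d c] at h
  linarith

theorem iteratedDeriv_exp_eval (g : ℝ[X]) (n : ℕ) :
    iteratedDeriv n (fun t => exp (g.eval t)) =
      fun t => ((fun q => derivative q + q * derivative g)^[n] 1).eval t * exp (g.eval t) := by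
  induction n with
  | zero => simp
  | succ n ih =>
    rw [iteratedDeriv_succ, ih, Function.iterate_succ_apply']
    funext t
    refine ((Polynomial.hasDerivAt _ t).mul (Polynomial.hasDerivAt g t).exp).deriv.trans ?_
    simp only [eval_add, eval_mul]
    ring

theorem integral_pow_four_gaussianReal (μ : ℝ) (v : ℝ≥0) :
    ∫ x, x ^ 4 ∂gaussianReal μ v = μ ^ 4 + 6 * μ ^ 2 * v + 3 * v ^ 2 := by
  have hmgf : mgf id (gaussianReal μ v) =
      fun t => exp ((C μ * X + C ((v : ℝ) / 2) * X ^ 2).eval t) := by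
    rw [mgf_id_gaussianReal]
    funext t
    simp only [eval_add, eval_mul, eval_C, eval_X, eval_pow]
    ring_nf
  have h0 : (0 : ℝ) ∈ interior (integrableExpSet id (gaussianReal μ v)) := by
    simp [integrableExpSet_id_gaussianReal]
  have h : ∫ x, x ^ 4 ∂gaussianReal μ v = iteratedDeriv 4 (mgf id (gaussianReal μ v)) 0 :=
    (iteratedDeriv_mgf_zero h0 4).symm
  rw [h, hmgf, iteratedDeriv_exp_eval]
  norm_num [Function.iterate_succ_apply']
  ring

theorem MeasureTheory.MemLp.integrable_mul_four {α : Type*} [MeasurableSpace α] {μ : Measure α}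
    {f g h k : α → ℝ} (hf : MemLp f 4 μ) (hg : MemLp g 4 μ) (hh : MemLp h 4 μ) (hk : MemLp k 4 μ) :
    Integrable (fun x => f x * g x * h x * k x) μ := by
  have : ENNReal.HolderTriple 4 4 2 := ⟨by
    rw [← ENNReal.toReal_eq_toReal_iff' (by simp) (by simp)]
    norm_num [ENNReal.toReal_add]⟩
  convert (hg.mul (r := 2) hf).integrable_mul (hk.mul (r := 2) hh) using 1
  funext x
  exact mul_assoc _ _ _

theorem Matrix.IsSymm.dotProduct_mulVec_comm {n R : Type*} [Fintype n] [CommSemiring R]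
    {A : Matrix n n R} (hA : A.IsSymm) (v w : n → R) : v ⬝ᵥ A *ᵥ w = w ⬝ᵥ A *ᵥ v := by
  rw [dotProduct_mulVec, ← mulVec_transpose, hA.eq, dotProduct_comm]

theorem Matrix.PosSemidef.isSymm_add_vecMulVec {n : Type*} [Fintype n] {C : Matrix n n ℝ}
    (hC : C.PosSemidef) (m : n → ℝ) : (C + vecMulVec m m).IsSymm :=
  (isHermitian_iff_isSymm.1 hC.isHermitian).add (transpose_vecMulVec m m)

namespace IsGaussianVec

variable {Ω : Type*} [MeasurableSpace Ω] {P : Measure Ω} {d : ℕ} {X : Ω → Fin d → ℝ}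
  {m : Fin d → ℝ} {C : Matrix (Fin d) (Fin d) ℝ}

theorem measurable_dotProduct (hX : IsGaussianVec P X m C) (a : Fin d → ℝ) :
    Measurable fun ω => a ⬝ᵥ X ω :=
  Finset.measurable_sum _ fun i _ => ((measurable_pi_apply i).comp hX.1).const_mul (a i)

theorem _root_.isGaussianVec_iff : IsGaussianVec P X m C ↔ Measurable X ∧ ∀ a : Fin d → ℝ,
    P.map (fun ω => a ⬝ᵥ X ω) = gaussianReal (a ⬝ᵥ m) (a ⬝ᵥ C *ᵥ a).toNNReal := by
  have hq : ∀ a : Fin d → ℝ, ∑ i, ∑ j, a i * C i j * a j = a ⬝ᵥ C *ᵥ a := fun a => by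
    simp only [dotProduct, mulVec, Finset.mul_sum, mul_assoc]
  simp only [IsGaussianVec, hq]
  rfl

theorem map_dotProduct (hX : IsGaussianVec P X m C) (a : Fin d → ℝ) :
    P.map (fun ω => a ⬝ᵥ X ω) = gaussianReal (a ⬝ᵥ m) (a ⬝ᵥ C *ᵥ a).toNNReal :=
  (isGaussianVec_iff.1 hX).2 a

theorem add_const (hX : IsGaussianVec P X m C) (r : Fin d → ℝ) :
    IsGaussianVec P (fun ω => X ω + r) (m + r) C := by
  refine isGaussianVec_iff.2 ⟨hX.1.add_const r, fun a => ?_⟩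
  have hshift : (fun ω => a ⬝ᵥ (X ω + r)) = (· + a ⬝ᵥ r) ∘ fun ω => a ⬝ᵥ X ω :=
    funext fun ω => dotProduct_add a (X ω) r
  rw [hshift, ← Measure.map_map (measurable_add_const _) (hX.measurable_dotProduct a),
    hX.map_dotProduct, gaussianReal_map_add_const, dotProduct_add]

theorem memLp_dotProduct (hX : IsGaussianVec P X m C) (a : Fin d → ℝ) {q : ℝ≥0∞} (hq : q ≠ ∞) :
    MemLp (fun ω => a ⬝ᵥ X ω) q P := by
  have h := memLp_id_gaussianReal' (μ := a ⬝ᵥ m) (v := (a ⬝ᵥ C *ᵥ a).toNNReal) q hq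
  rw [← hX.map_dotProduct, memLp_map_measure_iff aestronglyMeasurable_id
    (hX.measurable_dotProduct a).aemeasurable] at h
  exact h

theorem integrable_dotProduct_mul_four (hX : IsGaussianVec P X m C) (a b c e : Fin d → ℝ) :
    Integrable (fun ω => (a ⬝ᵥ X ω) * (b ⬝ᵥ X ω) * (c ⬝ᵥ X ω) * (e ⬝ᵥ X ω)) P :=
  MemLp.integrable_mul_four (hX.memLp_dotProduct a (by simp)) (hX.memLp_dotProduct b (by simp))
    (hX.memLp_dotProduct c (by simp)) (hX.memLp_dotProduct e (by simp))

theorem integral_dotProduct_pow_four (hX : IsGaussianVec P X m C) (hC : C.PosSemidef)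
    (a : Fin d → ℝ) :
    ∫ ω, (a ⬝ᵥ X ω) ^ 4 ∂P =
      (a ⬝ᵥ m) ^ 4 + 6 * (a ⬝ᵥ m) ^ 2 * (a ⬝ᵥ C *ᵥ a) + 3 * (a ⬝ᵥ C *ᵥ a) ^ 2 := by
  have hvar : 0 ≤ a ⬝ᵥ C *ᵥ a := by simpa using hC.dotProduct_mulVec_nonneg a
  have hmap : ∫ ω, (a ⬝ᵥ X ω) ^ 4 ∂P = ∫ x, x ^ 4 ∂(P.map fun ω => a ⬝ᵥ X ω) :=
    (integral_map (hX.measurable_dotProduct a).aemeasurable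
      (continuous_pow 4).aestronglyMeasurable).symm
  rw [hmap, hX.map_dotProduct, integral_pow_four_gaussianReal, Real.coe_toNNReal _ hvar]

theorem integral_dotProduct_mul_four (hX : IsGaussianVec P X m C) (hC : C.PosSemidef)
    {K : Matrix (Fin d) (Fin d) ℝ} (hK : K = C + vecMulVec m m) (a b c e : Fin d → ℝ) :
    ∫ ω, (a ⬝ᵥ X ω) * (b ⬝ᵥ X ω) * (c ⬝ᵥ X ω) * (e ⬝ᵥ X ω) ∂P =
      a ⬝ᵥ K *ᵥ b * (c ⬝ᵥ K *ᵥ e) + a ⬝ᵥ K *ᵥ c * (b ⬝ᵥ K *ᵥ e)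
        + a ⬝ᵥ K *ᵥ e * (b ⬝ᵥ K *ᵥ c) - 2 * ((a ⬝ᵥ m) * (b ⬝ᵥ m) * (c ⬝ᵥ m) * (e ⬝ᵥ m)) := by
  have hKsymm : K.IsSymm := hK ▸ hC.isSymm_add_vecMulVec m
  have hKself : ∀ a, a ⬝ᵥ K *ᵥ a = a ⬝ᵥ C *ᵥ a + (a ⬝ᵥ m) ^ 2 := fun a => by
    rw [hK, add_mulVec, dotProduct_add, vecMulVec_mulVec, op_smul_eq_smul, dotProduct_smul,
      smul_eq_mul, dotProduct_comm m a, sq]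
  set T : (Fin d → ℝ) → (Fin d → ℝ) → (Fin d → ℝ) → (Fin d → ℝ) → ℝ := fun a b c e =>
    ∫ ω, (a ⬝ᵥ X ω) * (b ⬝ᵥ X ω) * (c ⬝ᵥ X ω) * (e ⬝ᵥ X ω) ∂P - (a ⬝ᵥ K *ᵥ b * (c ⬝ᵥ K *ᵥ e)
      + a ⬝ᵥ K *ᵥ c * (b ⬝ᵥ K *ᵥ e) + a ⬝ᵥ K *ᵥ e * (b ⬝ᵥ K *ᵥ c)
      - 2 * ((a ⬝ᵥ m) * (b ⬝ᵥ m) * (c ⬝ᵥ m) * (e ⬝ᵥ m)))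
  suffices T a b c e = 0 from sub_eq_zero.1 this
  refine eq_zero_of_symm_of_map_add_of_diag T (fun x x' y z w => ?_) (fun x y z w => ?_)
    (fun x y z w => ?_) (fun x y z w => ?_) (fun x => ?_) a b c e
  · have hsplit : ∫ ω, ((x + x') ⬝ᵥ X ω) * (y ⬝ᵥ X ω) * (z ⬝ᵥ X ω) * (w ⬝ᵥ X ω) ∂P =
        ∫ ω, (x ⬝ᵥ X ω) * (y ⬝ᵥ X ω) * (z ⬝ᵥ X ω) * (w ⬝ᵥ X ω) ∂P
          + ∫ ω, (x' ⬝ᵥ X ω) * (y ⬝ᵥ X ω) * (z ⬝ᵥ X ω) * (w ⬝ᵥ X ω) ∂P := by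
      simp only [add_dotProduct, add_mul]
      exact integral_add (hX.integrable_dotProduct_mul_four x y z w)
        (hX.integrable_dotProduct_mul_four x' y z w)
    simp only [T]
    rw [hsplit]
    simp only [add_dotProduct]
    ring
  · simp only [T]
    congr 1
    · exact integral_congr_ae (ae_of_all _ fun ω => by ring)
    · rw [hKsymm.dotProduct_mulVec_comm y x]
      ring
  · simp only [T]
    congr 1
    · exact integral_congr_ae (ae_of_all _ fun ω => by ring)
    · rw [hKsymm.dotProduct_mulVec_comm z y]
      ring
  · simp only [T]
    congr 1
    · exact integral_congr_ae (ae_of_all _ fun ω => by ring)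
    · rw [hKsymm.dotProduct_mulVec_comm w z]
      ring
  · have hpow : ∫ ω, (x ⬝ᵥ X ω) * (x ⬝ᵥ X ω) * (x ⬝ᵥ X ω) * (x ⬝ᵥ X ω) ∂P =
        ∫ ω, (x ⬝ᵥ X ω) ^ 4 ∂P :=
      integral_congr_ae (ae_of_all _ fun ω => by ring)
    simp only [T, hpow, hX.integral_dotProduct_pow_four hC, hKself]
    ring

theorem integrable_apply_mul_four (hX : IsGaussianVec P X m C) (a b c e : Fin d) :
    Integrable (fun ω => X ω a * X ω b * X ω c * X ω e) P := by
  simpa using hX.integrable_dotProduct_mul_four (Pi.single a 1) (Pi.single b 1) (Pi.single c 1)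
    (Pi.single e 1)

theorem integral_apply_mul_four (hX : IsGaussianVec P X m C) (hC : C.PosSemidef)
    {K : Matrix (Fin d) (Fin d) ℝ} (hK : K = C + vecMulVec m m) (a b c e : Fin d) :
    ∫ ω, X ω a * X ω b * X ω c * X ω e ∂P =
      K a b * K c e + K a c * K b e + K a e * K b c - 2 * (m a * m b * m c * m e) := by
  simpa using hX.integral_dotProduct_mul_four hC hK (Pi.single a 1) (Pi.single b 1)
    (Pi.single c 1) (Pi.single e 1)

end IsGaussianVec

theorem Matrix.sum_sum_mul_isserlis {n R : Type*} [Fintype n] [CommRing R] {K : Matrix n n R}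
    (hK : K.IsSymm) (S : Matrix n n R) (r : n → R) (i j : n) :
    ∑ a, ∑ b, S a b * (K a b * K i j + K a i * K b j + K a j * K b i - 2 * (r a * r b * r i * r j)) =
      (K * S * K + K * Sᵀ * K + (∑ a, ∑ b, K a b * S a b) • K
        - (2 * ∑ a, ∑ b, r a * r b * S a b) • vecMulVec r r) i j := by
  have hKSK : (K * S * K) i j = ∑ a, ∑ b, K i a * S a b * K b j := by
    simp only [mul_apply, Finset.sum_mul]
    exact Finset.sum_comm
  have hKStK : (K * Sᵀ * K) i j = ∑ a, ∑ b, K i b * S a b * K a j := by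
    simp only [mul_apply, transpose_apply, Finset.sum_mul]
  rw [sub_apply, add_apply, add_apply, hKSK, hKStK]
  simp only [smul_apply, vecMulVec_apply, smul_eq_mul, Finset.sum_mul, Finset.mul_sum,
    ← Finset.sum_add_distrib, ← Finset.sum_sub_distrib]
  refine Finset.sum_congr rfl fun a _ => Finset.sum_congr rfl fun b _ => ?_
  rw [hK.apply a i, hK.apply b i]
  ring

theorem gaussian_fourth_moment_quadratic_general {p : ℕ}
    {Ω : Type*} [MeasurableSpace Ω] (P : Measure Ω)
    (zhat : Ω → Fin p → ℝ) (Chat : Matrix (Fin p) (Fin p) ℝ)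
    (hChat : Chat.PosSemidef) (hzhat : IsGaussianVec P zhat 0 Chat)
    (r : Fin p → ℝ)
    (z : Ω → Fin p → ℝ) (hz : ∀ ω, z ω = zhat ω + r)
    (Cz : Matrix (Fin p) (Fin p) ℝ) (hCz : Cz = Chat + Matrix.vecMulVec r r)
    (S : Matrix (Fin p) (Fin p) ℝ) :
    ∀ i j,
      (∫ ω, (∑ a, ∑ b, z ω a * S a b * z ω b) * (z ω i * z ω j) ∂P)
        = (Cz * S * Cz + Cz * Sᵀ * Cz
            + (∑ a, ∑ b, Cz a b * S a b) • Cz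
            - (2 * ∑ a, ∑ b, (r a * r b) * S a b) • Matrix.vecMulVec r r) i j := by
  intro i j
  have hgz : IsGaussianVec P z r Chat := by
    rw [show z = fun ω => zhat ω + r from funext hz]
    simpa using hzhat.add_const r
  have hint : ∀ a b, Integrable (fun ω => z ω a * z ω b * z ω i * z ω j) P :=
    fun a b => hgz.integrable_apply_mul_four a b i j
  calc _ = ∫ ω, ∑ a, ∑ b, S a b * (z ω a * z ω b * z ω i * z ω j) ∂P := by
        refine integral_congr_ae (ae_of_all _ fun ω => ?_)
        simp only [Finset.sum_mul]
        exact Finset.sum_congr rfl fun a _ => Finset.sum_congr rfl fun b _ => by ring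
    _ = ∑ a, ∑ b, S a b * ∫ ω, z ω a * z ω b * z ω i * z ω j ∂P :=
        (integral_finsetSum _ fun a _ => integrable_finsetSum _ fun b _ =>
          (hint a b).const_mul _).trans <| Finset.sum_congr rfl fun a _ =>
          (integral_finsetSum _ fun b _ => (hint a b).const_mul _).trans <|
            Finset.sum_congr rfl fun b _ => integral_const_mul _ _
    _ = _ := by
        simp only [hgz.integral_apply_mul_four hChat hCz]
        exact sum_sum_mul_isserlis (hCz ▸ hChat.isSymm_add_vecMulVec r) S r i j

/-- For `z = ẑ + r` with `ẑ ∼ N(0, C_ẑ)` and `C_z = C_ẑ + r rᵀ`,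
for any `p × p` matrix `S`:
`E[z zᵀ S z zᵀ] = C_z S C_z + C_z Sᵀ C_z + ⟨C_z, S⟩ C_z − 2 ⟨r rᵀ, S⟩ r rᵀ`. -/
theorem gaussian_fourth_moment_quadratic {p : ℕ}
    {Ω : Type*} [MeasurableSpace Ω] (P : Measure Ω) [IsProbabilityMeasure P]
    (zhat : Ω → Fin p → ℝ) (Chat : Matrix (Fin p) (Fin p) ℝ)
    (hChat : Chat.PosSemidef) (hzhat : IsGaussianVec P zhat 0 Chat)
    (r : Fin p → ℝ)
    (z : Ω → Fin p → ℝ) (hz : ∀ ω, z ω = zhat ω + r)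
    (Cz : Matrix (Fin p) (Fin p) ℝ) (hCz : Cz = Chat + Matrix.vecMulVec r r)
    (S : Matrix (Fin p) (Fin p) ℝ) :
    ∀ i j,
      (∫ ω, (∑ a, ∑ b, z ω a * S a b * z ω b) * (z ω i * z ω j) ∂P)
        = (Cz * S * Cz + Cz * Sᵀ * Cz
            + (∑ a, ∑ b, Cz a b * S a b) • Cz
            - (2 * ∑ a, ∑ b, (r a * r b) * S a b) • Matrix.vecMulVec r r) i j :=
  gaussian_fourth_moment_quadratic_general P zhat Chat hChat hzhat r z hz Cz hCz S
end
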